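/- arXiv:1904.09573 — 2 statements merged into one kernel-verified Lean document; each statement's English description precedes it below -/
import Mathlib

section
/- Fix real constants c_l, c_e, d_l, d_e, p_l, p_e with c_l > d_l ≥ 0 and c_e > d_e ≥ 0. Any critical point θ of g(θ) = (c_l + d_l cos(θ + p_l)) / (c_e + d_e cos(θ + p_e)) satisfies A sin θ + B cos θ = d_l d_e sin(p_e − p_l), where A = c_e d_l cos p_l − c_l d_e cos p_e and B = c_e d_l sin p_l − c_l d_e sin p_e. -/
/-! At a critical point of `f / g` with `g ≠ 0`, the quotient rule forces
`f' g - f g' = 0`. For `f = c_l + d_l cos(θ + p_l)` and `g = c_e + d_e cos(θ + p_e)` this reads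
`c_e d_l sin(θ + p_l) - c_l d_e sin(θ + p_e) = d_l d_e sin(p_e - p_l)`, the product terms
combining by the sine subtraction formula; expanding the remaining sines of sums in `θ` gives
`A sin θ + B cos θ`. -/

open Real

theorem const_add_mul_cos_pos {c d : ℝ} (hd : |d| < c) (x : ℝ) : 0 < c + d * cos x := by
  have : |d * cos x| ≤ |d| := by
    rw [abs_mul]
    exact mul_le_of_le_one_right (abs_nonneg d) (abs_cos_le_one x)
  linarith [neg_abs_le (d * cos x)]

theorem hasDerivAt_const_add_mul_cos_add (c d p t : ℝ) :
    HasDerivAt (fun s => c + d * cos (s + p)) (-(d * sin (t + p))) t := by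
  have h := ((hasDerivAt_cos (t + p)).comp t ((hasDerivAt_id t).add_const p)).const_mul d
  simpa [mul_comm] using h.const_add c

theorem HasDerivAt.mul_sub_mul_eq_zero_of_deriv_div_eq_zero {f g : ℝ → ℝ} {f' g' x : ℝ}
    (hf : HasDerivAt f f' x) (hg : HasDerivAt g g' x) (hgx : g x ≠ 0)
    (hcrit : _root_.deriv (fun t => f t / g t) x = 0) : f' * g x - f x * g' = 0 := by
  have hdiv : HasDerivAt (fun t => f t / g t) ((f' * g x - f x * g') / g x ^ 2) x :=
    hf.div hg hgx
  rw [hdiv.deriv, div_eq_zero_iff] at hcrit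
  exact hcrit.resolve_right (pow_ne_zero 2 hgx)

theorem stmt3_general (cl ce dl de pl pe : ℝ)
    (hde : 0 ≤ de) (hce : de < ce)
    (θ : ℝ)
    (hcrit : deriv (fun t : ℝ =>
      (cl + dl * Real.cos (t + pl)) / (ce + de * Real.cos (t + pe))) θ = 0) :
    (ce * dl * Real.cos pl - cl * de * Real.cos pe) * Real.sin θ
      + (ce * dl * Real.sin pl - cl * de * Real.sin pe) * Real.cos θ
      = dl * de * Real.sin (pe - pl) := by
  have hden : ce + de * cos (θ + pe) ≠ 0 :=
    (const_add_mul_cos_pos (by rwa [abs_of_nonneg hde]) _).ne'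
  have hkey := (hasDerivAt_const_add_mul_cos_add cl dl pl θ).mul_sub_mul_eq_zero_of_deriv_div_eq_zero
    (hasDerivAt_const_add_mul_cos_add ce de pe θ) hden hcrit
  rw [sin_add, cos_add, sin_add, cos_add] at hkey
  rw [sin_sub]
  linear_combination -hkey + dl * de * (sin pe * cos pl - cos pe * sin pl) * sin_sq_add_cos_sq θ

/-- Any critical point of
`g(θ) = (c_l + d_l cos(θ+p_l))/(c_e + d_e cos(θ+p_e))` satisfies
`A sin θ + B cos θ = d_l d_e sin(p_e − p_l)`. -/
theorem stmt3 (cl ce dl de pl pe : ℝ)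
    (hdl : 0 ≤ dl) (hcl : dl < cl) (hde : 0 ≤ de) (hce : de < ce)
    (θ : ℝ)
    (hcrit : deriv (fun t : ℝ =>
      (cl + dl * Real.cos (t + pl)) / (ce + de * Real.cos (t + pe))) θ = 0) :
    (ce * dl * Real.cos pl - cl * de * Real.cos pe) * Real.sin θ
      + (ce * dl * Real.sin pl - cl * de * Real.sin pe) * Real.cos θ
      = dl * de * Real.sin (pe - pl) :=
  stmt3_general cl ce dl de pl pe hde hce θ hcrit
end

section
/- Let Y_l, Y_e be M×M Hermitian positive definite matrices and define g(v) = (v^H Y_l v)/(v^H Y_e v) for v ≠ 0. Fix v_z ≠ 0 and define f(v | v_z) = 2 Re(v_z^H Y_l v)/(v_z^H Y_e v_z) − (v_z^H Y_l v_z)/(v_z^H Y_e v_z)² · [ λ_max(Y_e) v^H v + 2 Re(v_z^H (Y_e − λ_max(Y_e) I) v) ]. Then for all v ≠ 0, g(v) ≥ f(v | v_z) + (g(v_z) − f(v_z | v_z)). -/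
/-!
The quadratic-over-linear function `(x, t) ↦ xᴴ Y_l x / t` is jointly convex, so `g(v)` lies above
its tangent plane at `(v_z, v_zᴴ Y_e v_z)` evaluated at `t = vᴴ Y_e v`, and that tangent is
decreasing in `t`. Since `λ_max I - Y_e ⪰ 0`, the form `vᴴ (Y_e - λ_max I) v` is concave and lies
below its own tangent at `v_z`; this majorizes `vᴴ Y_e v` by
`λ_max vᴴ v + 2 Re (v_zᴴ (Y_e - λ_max I) v) - v_zᴴ (Y_e - λ_max I) v_z`. Substituting the majorant
for `t` leaves exactly `f(v | v_z)` plus a constant.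
-/

open Matrix ComplexOrder

namespace Matrix

variable {𝕜 n : Type*} [RCLike 𝕜] [Fintype n]

open RCLike

lemma IsHermitian.re_dotProduct_mulVec_comm {A : Matrix n n 𝕜} (hA : A.IsHermitian)
    (x y : n → 𝕜) : re (star x ⬝ᵥ A *ᵥ y) = re (star y ⬝ᵥ A *ᵥ x) := by
  rw [← RCLike.conj_re (star y ⬝ᵥ A *ᵥ x), ← RCLike.star_def, star_dotProduct, star_mulVec,
    ← dotProduct_mulVec, hA.eq]

lemma re_dotProduct_sub_smul_one_mulVec [DecidableEq n] (A : Matrix n n 𝕜) (lam : ℝ)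
    (x y : n → 𝕜) :
    re (star x ⬝ᵥ (A - (lam : 𝕜) • (1 : Matrix n n 𝕜)) *ᵥ y)
      = re (star x ⬝ᵥ A *ᵥ y) - lam * re (star x ⬝ᵥ y) := by
  rw [sub_mulVec, smul_mulVec, one_mulVec, dotProduct_sub, dotProduct_smul, map_sub,
    smul_eq_mul, re_ofReal_mul]

lemma PosSemidef.two_mul_re_le_add {P : Matrix n n 𝕜} (hP : P.PosSemidef) (x y : n → 𝕜) :
    2 * re (star y ⬝ᵥ P *ᵥ x) ≤ re (star x ⬝ᵥ P *ᵥ x) + re (star y ⬝ᵥ P *ᵥ y) := by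
  have hxy := hP.isHermitian.re_dotProduct_mulVec_comm x y
  have hnonneg := (RCLike.nonneg_iff.mp (hP.dotProduct_mulVec_nonneg (x - y))).1
  simp only [star_sub, sub_dotProduct, mulVec_sub, dotProduct_sub, map_sub] at hnonneg
  linarith

/-- The tangent inequality for the jointly convex quadratic-over-linear function
`(x, b) ↦ xᴴ P x / b`, taken at the point `(y, c)`. -/
lemma PosSemidef.quadOverLin_tangent_le {P : Matrix n n 𝕜} (hP : P.PosSemidef) {b c : ℝ}
    (hb : 0 < b) (hc : 0 < c) (x y : n → 𝕜) :
    2 * re (star y ⬝ᵥ P *ᵥ x) / c - re (star y ⬝ᵥ P *ᵥ y) / c ^ 2 * b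
      ≤ re (star x ⬝ᵥ P *ᵥ x) / b := by
  have h := hP.two_mul_re_le_add ((c : 𝕜) • x) ((b : 𝕜) • y)
  simp only [star_smul, RCLike.star_def, RCLike.conj_ofReal, smul_dotProduct, mulVec_smul,
    dotProduct_smul, smul_eq_mul, re_ofReal_mul] at h
  rw [div_mul_eq_mul_div, div_sub_div _ _ hc.ne' (by positivity),
    div_le_div_iff₀ (by positivity) hb]
  nlinarith

open scoped MatrixOrder Matrix.Norms.L2Operator in
lemma IsHermitian.posSemidef_smul_one_sub [DecidableEq n] {A : Matrix n n 𝕜}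
    (hA : A.IsHermitian) {lam : ℝ} (h : ∀ i, hA.eigenvalues i ≤ lam) :
    ((lam : 𝕜) • (1 : Matrix n n 𝕜) - A).PosSemidef := by
  have hle : A ≤ algebraMap ℝ (Matrix n n 𝕜) lam := by
    rw [le_algebraMap_iff_spectrum_le (ha := hA.isSelfAdjoint),
      hA.spectrum_real_eq_range_eigenvalues]
    rintro _ ⟨i, rfl⟩
    exact h i
  simpa [Algebra.algebraMap_eq_smul_one] using Matrix.le_iff.mp hle

lemma IsHermitian.re_dotProduct_mulVec_le_of_eigenvalues_le [DecidableEq n]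
    {A : Matrix n n 𝕜} (hA : A.IsHermitian) {lam : ℝ} (h : ∀ i, hA.eigenvalues i ≤ lam)
    (x y : n → 𝕜) :
    re (star x ⬝ᵥ A *ᵥ x)
      ≤ lam * re (star x ⬝ᵥ x) + 2 * re (star y ⬝ᵥ (A - (lam : 𝕜) • (1 : Matrix n n 𝕜)) *ᵥ x)
        - re (star y ⬝ᵥ (A - (lam : 𝕜) • (1 : Matrix n n 𝕜)) *ᵥ y) := by
  have hP := (hA.posSemidef_smul_one_sub h).two_mul_re_le_add x y
  rw [← neg_sub] at hP
  simp only [neg_mulVec, dotProduct_neg, map_neg, re_dotProduct_sub_smul_one_mulVec] at hP ⊢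
  linarith

end Matrix

/-- MM surrogate lower bound: with `g(v) = (vᴴ Y_l v)/(vᴴ Y_e v)` and
`f(v|v_z)` as in the paper, `g(v) ≥ f(v|v_z) + (g(v_z) − f(v_z|v_z))` for all `v ≠ 0`. -/
theorem stmt10 (M : ℕ) (Yl Ye : Matrix (Fin M) (Fin M) ℂ)
    (hYl : Yl.PosDef) (hYe : Ye.PosDef)
    (lam : ℝ) (hlam : IsGreatest (Set.range hYe.1.eigenvalues) lam)
    (vz : Fin M → ℂ) (hvz : vz ≠ 0) :
    let g : (Fin M → ℂ) → ℝ := fun v =>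
      (star v ⬝ᵥ Yl.mulVec v).re / (star v ⬝ᵥ Ye.mulVec v).re
    let f : (Fin M → ℂ) → ℝ := fun v =>
      2 * (star vz ⬝ᵥ Yl.mulVec v).re / (star vz ⬝ᵥ Ye.mulVec vz).re
        - ((star vz ⬝ᵥ Yl.mulVec vz).re / ((star vz ⬝ᵥ Ye.mulVec vz).re) ^ 2)
          * (lam * (star v ⬝ᵥ v).re
            + 2 * (star vz ⬝ᵥ (Ye - (lam : ℂ) • (1 : Matrix (Fin M) (Fin M) ℂ)).mulVec v).re)
    ∀ v : Fin M → ℂ, v ≠ 0 → g v ≥ f v + (g vz - f vz) := by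
  intro g f v hv
  simp only [g, f, ge_iff_le]
  set D := Ye - (lam : ℂ) • (1 : Matrix (Fin M) (Fin M) ℂ)
  have hbv := (Complex.lt_def.mp (hYe.dotProduct_mulVec_pos hv)).1
  have hbz := (Complex.lt_def.mp (hYe.dotProduct_mulVec_pos hvz)).1
  have haz := (Complex.le_def.mp (hYl.posSemidef.dotProduct_mulVec_nonneg vz)).1
  have hconv := hYl.posSemidef.quadOverLin_tangent_le hbv hbz v vz
  have hmaj : (star v ⬝ᵥ Ye *ᵥ v).re
      ≤ lam * (star v ⬝ᵥ v).re + 2 * (star vz ⬝ᵥ D *ᵥ v).re - (star vz ⬝ᵥ D *ᵥ vz).re :=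
    hYe.1.re_dotProduct_mulVec_le_of_eigenvalues_le (fun i => hlam.2 (Set.mem_range_self i)) v vz
  have hdzz : (star vz ⬝ᵥ D *ᵥ vz).re = (star vz ⬝ᵥ Ye *ᵥ vz).re - lam * (star vz ⬝ᵥ vz).re :=
    re_dotProduct_sub_smul_one_mulVec Ye lam vz vz
  simp only [RCLike.re_to_complex, Complex.zero_re] at hbv hbz haz hconv
  rw [hdzz] at hmaj ⊢
  set k := (star vz ⬝ᵥ Yl *ᵥ vz).re / (star vz ⬝ᵥ Ye *ᵥ vz).re ^ 2
  have hgz : (star vz ⬝ᵥ Yl *ᵥ vz).re / (star vz ⬝ᵥ Ye *ᵥ vz).re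
      = k * (star vz ⬝ᵥ Ye *ᵥ vz).re := by
    simp only [k]; field_simp
  have := mul_le_mul_of_nonneg_left hmaj (by positivity : 0 ≤ k)
  rw [mul_div_assoc 2 (star vz ⬝ᵥ Yl *ᵥ vz).re, hgz]
  linarith
end
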